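/- In the Zeckendorf game played from n copies of F_1, for every n > 2 the second player has a winning strategy (where the player who makes the final move, reaching the Zeckendorf decomposition, wins). -/

import Mathlib

/-- Fibonacci numbers indexed `F_1 = 1, F_2 = 2, F_{i+1} = F_i + F_{i-1}`. -/
def ZFib (i : ℕ) : ℕ := Nat.fib (i + 1)

/-- Legal moves of the Zeckendorf game, on multisets of Fibonacci indices. -/
inductive ZMove : Multiset ℕ → Multiset ℕ → Prop
  | combine (s : Multiset ℕ) (i : ℕ) (h : 2 ≤ i) :
      ZMove ((i - 1) ::ₘ i ::ₘ s) ((i + 1) ::ₘ s)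
  | addOnes (s : Multiset ℕ) :
      ZMove (1 ::ₘ 1 ::ₘ s) (2 ::ₘ s)
  | splitTwos (s : Multiset ℕ) :
      ZMove (2 ::ₘ 2 ::ₘ s) (1 ::ₘ 3 ::ₘ s)
  | split (s : Multiset ℕ) (i : ℕ) (h : 3 ≤ i) :
      ZMove (i ::ₘ i ::ₘ s) ((i - 2) ::ₘ (i + 1) ::ₘ s)

mutual
  /-- The player to move from this state can force a win (i.e., can force
  that they make the final move). -/
  inductive MoverWins : Multiset ℕ → Prop
    | step (s t : Multiset ℕ) : ZMove s t → MoverLoses t → MoverWins s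

  /-- Every move by the player to move leads to a state winning for the
  opponent; in particular a terminal state is losing for the player to move
  (the previous player made the last move and wins). -/
  inductive MoverLoses : Multiset ℕ → Prop
    | step (s : Multiset ℕ) : (∀ t, ZMove s t → MoverWins t) → MoverLoses s
end

/-!
Positions are written as multisets of indices, `1^m` for `m` ones. From `1^(k+3)` the first move is
forced, to `B = 2 + 1^(k+1)`, so it suffices that `B` is a win for the player to move. Every move
lowers a potential, so the game is determined; suppose `B` is lost. Then its successor
`A = 3 + 1^k` is won, and the only move from `A` gives `C = 2 + 3 + 1^(k-2)`, which is therefore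
lost. Hence both `D = 4 + 1^(k-2)` and `E = 3 + 3 + 1^(k-3)` are won, and the only move from `D`
gives a lost `G = 2 + 4 + 1^(k-4)`. A winning move from `E` leads either to `1 + 4 + 1^(k-3) = D`,
which is won, or to `J = 2 + 3 + 3 + 1^(k-5)`; but splitting the threes in `J` reaches the lost `G`,
so `J` is won as well. Either way we reach a contradiction.
-/

open Multiset

mutual
theorem MoverWins.not_moverLoses {s : Multiset ℕ} : MoverWins s → ¬ MoverLoses s
  | .step _ t hst ht, .step _ hs => MoverLoses.not_moverWins ht (hs t hst)
theorem MoverLoses.not_moverWins {s : Multiset ℕ} : MoverLoses s → ¬ MoverWins s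
  | .step _ hs, .step _ t hst ht => MoverWins.not_moverLoses (hs t hst) ht
end

theorem MoverLoses.moverWins_of_zMove {s t : Multiset ℕ} (hs : MoverLoses s) (h : ZMove s t) :
    MoverWins t := by
  cases hs with | step _ hs => exact hs t h

-- Every move lowers `sum + card` and creates at most one 2, except splitting two 2s, which keeps
-- `sum + card` and removes two of them.
def zPotential (s : Multiset ℕ) : ℕ := 2 * (s.sum + card s) + s.count 2

theorem ZMove.zPotential_lt {s t : Multiset ℕ} (h : ZMove s t) : zPotential t < zPotential s := by
  cases h with
  | combine r i hi => simp [zPotential, count_cons]; split_ifs <;> omega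
  | addOnes r => simp [zPotential]; omega
  | splitTwos r => simp [zPotential]; omega
  | split r i hi => simp [zPotential, count_cons]; split_ifs <;> omega

theorem wellFounded_flip_zMove : WellFounded (flip ZMove) :=
  Subrelation.wf (fun h => ZMove.zPotential_lt h) (measure zPotential).wf

theorem moverWins_or_moverLoses (s : Multiset ℕ) : MoverWins s ∨ MoverLoses s := by
  induction s using wellFounded_flip_zMove.induction with
  | _ s ih =>
  refine or_iff_not_imp_left.2 fun hs => .step s fun t hst => ?_
  exact (ih t hst).resolve_right fun ht => hs (.step s t hst ht)

theorem Multiset.filter_ne_add_replicate_count {α : Type*} [DecidableEq α] (s : Multiset α)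
    (a : α) : s.filter (· ≠ a) + replicate (s.count a) a = s := by
  rw [← filter_eq', add_comm]
  exact filter_add_not _ s

theorem ZMove.two_le_card {s t : Multiset ℕ} (h : ZMove s t) : 2 ≤ card s := by
  cases h <;> simp

theorem ZMove.cases_of_add_replicate_one {u t : Multiset ℕ} {m : ℕ} (h1 : 1 ∉ u) (h2 : 2 ∉ u)
    (h : ZMove (u + replicate m 1) t) :
    (∃ k, m = k + 2 ∧ t = 2 ::ₘ (u + replicate k 1)) ∨
      ∃ u', ZMove u u' ∧ t = u' + replicate m 1 := by
  generalize hs : u + replicate m 1 = s at h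
  have hu : s.filter (· ≠ 1) = u := by
    rw [← hs, filter_add, filter_eq_self.2 fun a ha => by rintro rfl; exact h1 ha]
    simpa using fun a => eq_of_mem_replicate
  have hm : s.count 1 = m := by
    rw [← hs]
    simp [count_eq_zero.2 h1]
  have h2s : 2 ∉ s := by
    rw [← hs]
    simp [h2, mem_replicate]
  cases h with
  | combine r i hi =>
    have : i ≠ 2 := by rintro rfl; simp at h2s
    refine .inr ⟨(i + 1) ::ₘ r.filter (· ≠ 1), ?_, ?_⟩
    · rw [← hu, filter_cons_of_pos _ (by omega), filter_cons_of_pos _ (by omega)]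
      exact .combine _ i hi
    · rw [← hm, count_cons_of_ne (by omega), count_cons_of_ne (by omega), cons_add,
        filter_ne_add_replicate_count]
  | addOnes r =>
    refine .inl ⟨r.count 1, by simp [← hm], ?_⟩
    rw [← hu, filter_cons_of_neg _ (by simp), filter_cons_of_neg _ (by simp),
      filter_ne_add_replicate_count]
  | splitTwos r => simp at h2s
  | split r i hi =>
    refine .inr ⟨(i - 2) ::ₘ (i + 1) ::ₘ r.filter (· ≠ 1), ?_, ?_⟩
    · rw [← hu, filter_cons_of_pos _ (by omega), filter_cons_of_pos _ (by omega)]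
      exact .split _ i hi
    · rw [← hm, count_cons_of_ne (by omega), count_cons_of_ne (by omega), cons_add, cons_add,
        filter_ne_add_replicate_count]

theorem ZMove.eq_of_pair {i : ℕ} {t : Multiset ℕ} (hi : 3 ≤ i) (h : ZMove {i, i} t) :
    t = {i - 2, i + 1} := by
  generalize hs : ({i, i} : Multiset ℕ) = s at h
  have hmem : ∀ j ∈ s, j = i := by rw [← hs]; simp
  cases h with
  | combine r j hj =>
    have := hmem j (by simp)
    have := hmem (j - 1) (by simp)
    omega
  | addOnes r => have := hmem 1 (by simp); omega
  | splitTwos r => have := hmem 2 (by simp); omega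
  | split r j hj =>
    obtain rfl := hmem j (by simp)
    have : r = 0 := by simpa [← cons_zero] using hs.symm
    simp [this]

theorem moverLoses_replicate_one {m : ℕ} (h : MoverWins (2 ::ₘ replicate m 1)) :
    MoverLoses (replicate (m + 2) 1) := by
  refine .step _ fun t hst => ?_
  rw [← zero_add (replicate _ _)] at hst
  rcases hst.cases_of_add_replicate_one (by simp) (by simp) with ⟨k, hk, rfl⟩ | ⟨u', hu', -⟩
  · simpa [show k = m by omega] using h
  · simpa using hu'.two_le_card

theorem MoverWins.moverLoses_of_cons_replicate_one {a m : ℕ} (ha : 3 ≤ a)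
    (h : MoverWins (a ::ₘ replicate m 1)) :
    ∃ k, m = k + 2 ∧ MoverLoses (2 ::ₘ a ::ₘ replicate k 1) := by
  obtain ⟨_, t, hst, ht⟩ := h
  rw [← singleton_add] at hst
  rcases hst.cases_of_add_replicate_one (by simp; omega) (by simp; omega) with
    ⟨k, hk, rfl⟩ | ⟨u', hu', -⟩
  · exact ⟨k, hk, by simpa using ht⟩
  · simpa using hu'.two_le_card

theorem MoverWins.moverLoses_of_cons_cons_replicate_one {i m : ℕ} (hi : 3 ≤ i)
    (h : MoverWins (i ::ₘ i ::ₘ replicate m 1)) :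
    MoverLoses ((i - 2) ::ₘ (i + 1) ::ₘ replicate m 1) ∨
      ∃ k, m = k + 2 ∧ MoverLoses (2 ::ₘ i ::ₘ i ::ₘ replicate k 1) := by
  obtain ⟨_, t, hst, ht⟩ := h
  rw [show i ::ₘ i ::ₘ replicate m 1 = {i, i} + replicate m 1 by simp] at hst
  rcases hst.cases_of_add_replicate_one (by simp; omega) (by simp; omega) with
    ⟨k, hk, rfl⟩ | ⟨u', hu', rfl⟩
  · exact .inr ⟨k, hk, by simpa using ht⟩
  · rw [ZMove.eq_of_pair hi hu'] at ht
    exact .inl (by simpa using ht)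

theorem moverWins_two_cons_replicate_one (k : ℕ) : MoverWins (2 ::ₘ replicate (k + 1) 1) := by
  refine (moverWins_or_moverLoses _).resolve_right fun hB => ?_
  have hA : MoverWins (3 ::ₘ replicate k 1) :=
    hB.moverWins_of_zMove (by rw [replicate_succ, cons_swap]; exact .combine _ 2 le_rfl)
  obtain ⟨j, rfl, hC⟩ := hA.moverLoses_of_cons_replicate_one le_rfl
  have hD : MoverWins (4 ::ₘ replicate j 1) := hC.moverWins_of_zMove (.combine _ 3 (by norm_num))
  obtain ⟨l, rfl, hG⟩ := hD.moverLoses_of_cons_replicate_one (by norm_num)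
  have hE : MoverWins (3 ::ₘ 3 ::ₘ replicate (l + 1) 1) := hC.moverWins_of_zMove (by
    rw [replicate_succ, cons_swap 3, cons_swap 2]
    exact .combine _ 2 le_rfl)
  rcases hE.moverLoses_of_cons_cons_replicate_one le_rfl with hD' | ⟨p, hp, hJ⟩
  · refine hD.not_moverLoses ?_
    rw [replicate_succ, cons_swap]
    exact hD'
  · obtain rfl : l = p + 1 := by omega
    have hJG : ZMove (2 ::ₘ 3 ::ₘ 3 ::ₘ replicate p 1) (2 ::ₘ 4 ::ₘ replicate (p + 1) 1) := by
      rw [cons_swap 2, cons_swap 2, replicate_succ, cons_swap 4 1, cons_swap 2 1, cons_swap 2 4]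
      exact .split _ 3 le_rfl
    exact (hJ.moverWins_of_zMove hJG).not_moverLoses hG

/-- For every `n > 2`, Player 2 has a winning strategy in the Zeckendorf game:
the player to move (Player 1) loses from the initial state of `n` copies of `F_1`. -/
theorem player_two_wins (n : ℕ) (hn : 2 < n) :
    MoverLoses (Multiset.replicate n 1) := by
  obtain ⟨k, rfl⟩ : ∃ k, n = k + 3 := ⟨n - 3, by omega⟩
  exact moverLoses_replicate_one (moverWins_two_cons_replicate_one k)
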